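/- arXiv:2101.06330 — 9 statements merged into one kernel-verified Lean document; each statement's English description precedes it below -/
import Mathlib

section
/- Let n ≥ 0, ξ ∈ ℂ, m, ε ∈ ℝ. Let Θ be the (2n+1)×(2n+1) permutation matrix with entries Θ_{jk} = δ_{j,−k} (indices j, k ∈ {−n,…,n}) and set Θ' := Θ ⊗ σ₂, a 2(2n+1)×2(2n+1) matrix. Then Θ' Ĥ_n(ξ) Θ' = −Ĥ_n(conj ξ), where Ĥ_n(conj ξ) denotes the bulk replica Hamiltonian with ξ replaced by its complex conjugate (same m and ε). -/
open Matrix Complex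
open scoped Kronecker

noncomputable section

def σ1 : Matrix (Fin 2) (Fin 2) ℂ := !![0, 1; 1, 0]
def σ2 : Matrix (Fin 2) (Fin 2) ℂ := !![0, -Complex.I; Complex.I, 0]
def σ3 : Matrix (Fin 2) (Fin 2) ℂ := !![1, 0; 0, -1]

/-- `ξ·σ = ξ₁σ₁ + ξ₂σ₂ = !![0, conj ξ; ξ, 0]`. -/
def xiSigma (ξ : ℂ) : Matrix (Fin 2) (Fin 2) ℂ := !![0, (starRingEnd ℂ) ξ; ξ, 0]

def Bm (m : ℝ) : Matrix (Fin 2) (Fin 2) ℂ :=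
  (((1 + m) / 2 : ℝ) : ℂ) • !![0, 1; 0, 0] + (((1 - m) / 2 : ℝ) : ℂ) • !![0, 0; 1, 0]

/-- The 2×2 block of the bulk replica Hamiltonian at block position `(k, k')`. -/
def replicaBlock (ξ : ℂ) (m ε : ℝ) (k k' : ℤ) : Matrix (Fin 2) (Fin 2) ℂ :=
  if k' = k then (k : ℂ) • (1 : Matrix (Fin 2) (Fin 2) ℂ) + xiSigma ξ
  else if k' = k - 1 then (ε : ℂ) • Bm m
  else if k' = k + 1 then (ε : ℂ) • (Bm m)ᴴ
  else 0

/-- The bulk replica Hamiltonian `Ĥ_n(ξ)`, block tridiagonal with blocks indexed by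
`k, k' ∈ {-n, …, n}` (here realized by `Fin (2n+1)` via `k = j - n`). -/
def Hrep (n : ℕ) (ξ : ℂ) (m ε : ℝ) :
    Matrix (Fin (2 * n + 1) × Fin 2) (Fin (2 * n + 1) × Fin 2) ℂ :=
  fun p q => replicaBlock ξ m ε ((p.1 : ℤ) - n) ((q.1 : ℤ) - n) p.2 q.2

/-- The permutation matrix `Θ` with entries `Θ_{jk} = δ_{j,-k}`, indices `j,k ∈ {-n,…,n}`. -/
def Theta (n : ℕ) : Matrix (Fin (2 * n + 1)) (Fin (2 * n + 1)) ℂ :=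
  fun j k => if ((j : ℤ) - n) = -((k : ℤ) - n) then 1 else 0


lemma conj2 (a b c d : ℂ) : σ2 * !![a,b;c,d] * σ2 = !![d,-c;-b,a] := by
  ext i j
  fin_cases i <;> fin_cases j <;>
    simp [σ2, Matrix.mul_apply, Fin.sum_univ_two] <;> ring_nf <;> simp [Complex.I_sq]

lemma diag_eq (ξ : ℂ) (k : ℤ) :
    (k : ℂ) • (1 : Matrix (Fin 2) (Fin 2) ℂ) + xiSigma ξ
      = !![(k:ℂ), (starRingEnd ℂ) ξ; ξ, (k:ℂ)] := by
  ext i j; fin_cases i <;> fin_cases j <;> simp [xiSigma, Matrix.one_apply]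

lemma bm_eq (m ε : ℝ) :
    (ε : ℂ) • Bm m = !![0, ((ε*(1+m)/2 : ℝ) : ℂ); ((ε*(1-m)/2 : ℝ) : ℂ), 0] := by
  ext i j; fin_cases i <;> fin_cases j <;> push_cast <;> simp [Bm] <;> ring

lemma bmh_eq (m ε : ℝ) :
    (ε : ℂ) • (Bm m)ᴴ = !![0, ((ε*(1-m)/2 : ℝ) : ℂ); ((ε*(1+m)/2 : ℝ) : ℂ), 0] := by
  ext i j; fin_cases i <;> fin_cases j <;>
    push_cast <;> simp [Bm, Matrix.conjTranspose_apply] <;> ring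

lemma key (ξ : ℂ) (m ε : ℝ) (k k' : ℤ) :
    σ2 * replicaBlock ξ m ε (-k) (-k') * σ2
      = - replicaBlock ((starRingEnd ℂ) ξ) m ε k k' := by
  unfold replicaBlock
  rcases eq_or_ne k' k with h | h
  · subst h
    simp only [eq_self_iff_true, if_true]
    rw [diag_eq, diag_eq, conj2]
    ext i j; fin_cases i <;> fin_cases j <;> push_cast <;> simp
  · rcases eq_or_ne k' (k - 1) with h1 | h1
    · rw [if_neg (by omega), if_neg (by omega), if_pos (by omega), if_neg h, if_pos h1]
      rw [bmh_eq, bm_eq, conj2]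
      ext i j; fin_cases i <;> fin_cases j <;> push_cast <;> simp <;> ring
    · rcases eq_or_ne k' (k + 1) with h2 | h2
      · rw [if_neg (by omega), if_pos (by omega), if_neg h, if_neg h1, if_pos h2]
        rw [bm_eq, bmh_eq, conj2]
        ext i j; fin_cases i <;> fin_cases j <;> push_cast <;> simp <;> ring
      · rw [if_neg (by omega), if_neg (by omega), if_neg (by omega),
          if_neg h, if_neg h1, if_neg h2]
        simp [σ2]

def rev (n : ℕ) (p : Fin (2 * n + 1)) : Fin (2 * n + 1) := ⟨2 * n - p, by omega⟩

lemma theta_apply (n : ℕ) (p j : Fin (2 * n + 1)) :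
    Theta n p j = if j = rev n p then 1 else 0 := by
  have hp := p.isLt; have hj := j.isLt
  unfold Theta rev
  refine if_congr ?_ rfl rfl
  rw [Fin.ext_iff]
  constructor <;> intro h <;> simp_all <;> omega

lemma theta_apply' (n : ℕ) (p j : Fin (2 * n + 1)) :
    Theta n p j = if p = rev n j then 1 else 0 := by
  have hp := p.isLt; have hj := j.isLt
  unfold Theta rev
  refine if_congr ?_ rfl rfl
  rw [Fin.ext_iff]
  constructor <;> intro h <;> simp_all <;> omega

/-- `Θ' Ĥ_n(ξ) Θ' = -Ĥ_n(conj ξ)` where `Θ' = Θ ⊗ σ₂`. -/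
theorem replica_symmetry (n : ℕ) (ξ : ℂ) (m ε : ℝ) :
    (Theta n ⊗ₖ σ2) * Hrep n ξ m ε * (Theta n ⊗ₖ σ2)
      = -Hrep n ((starRingEnd ℂ) ξ) m ε := by
  ext ⟨p, a⟩ ⟨q, b⟩
  have hp := p.isLt; have hq := q.isLt
  have h1 : ((Theta n ⊗ₖ σ2) * Hrep n ξ m ε * (Theta n ⊗ₖ σ2)) (p, a) (q, b)
      = (σ2 * replicaBlock ξ m ε (-((p : ℤ) - n)) (-((q : ℤ) - n)) * σ2) a b := by
    simp only [Matrix.mul_apply, Fintype.sum_prod_type, kroneckerMap_apply,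
      theta_apply (n := n) (p := p), theta_apply' (n := n) (j := q), Hrep,
      ite_mul, mul_ite, one_mul, mul_one, zero_mul, mul_zero,
      Finset.sum_ite_irrel, Finset.sum_const_zero,
      Finset.sum_ite_eq, Finset.sum_ite_eq', Finset.mem_univ, if_true]
    have hrp : ((rev n p : ℤ)) - n = -((p : ℤ) - n) := by simp [rev]; omega
    have hrq : ((rev n q : ℤ)) - n = -((q : ℤ) - n) := by simp [rev]; omega
    rw [hrp, hrq]
  rw [h1, key]
  simp [Hrep]
end
end

section
/- Let n ≥ 0, ξ ∈ ℂ, m, ε ∈ ℝ. The spectrum of the Hermitian matrix Ĥ_n(ξ) is symmetric about zero: a real number E is an eigenvalue of Ĥ_n(ξ) if and only if −E is an eigenvalue of Ĥ_n(ξ). -/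
open Matrix Complex
open scoped Kronecker

noncomputable section

def sg : Fin 2 → ℂ := ![1, -1]

lemma sg_ne_zero (s : Fin 2) : sg s ≠ 0 := by fin_cases s <;> simp [sg]

lemma rev_val (n : ℕ) (j : Fin (2 * n + 1)) :
    ((j.rev : ℤ)) - (n : ℤ) = -(((j : ℤ)) - n) := by
  have h := j.isLt
  have hv := Fin.val_rev j
  omega

lemma key_block (ξ : ℂ) (m ε : ℝ) (k k' : ℤ) (s u : Fin 2) :
    replicaBlock ξ m ε k (-k') s u.rev * sg u.rev
      = -(sg s * (starRingEnd ℂ) (replicaBlock ξ m ε (-k) k' s.rev u)) := by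
  unfold replicaBlock
  by_cases h1 : k' = -k
  · rw [if_pos (by omega), if_pos (by omega)]
    fin_cases s <;> fin_cases u <;>
      simp [sg, xiSigma, Matrix.one_apply, Fin.rev, map_intCast, map_ofNat]
  · by_cases h2 : k' = -k + 1
    · rw [if_neg (by omega), if_pos (by omega), if_neg (by omega), if_neg (by omega),
        if_pos (by omega)]
      fin_cases s <;> fin_cases u <;>
        simp [sg, Bm, Fin.rev, Matrix.conjTranspose_apply, Complex.conj_ofReal, map_ofNat]
    · by_cases h3 : k' = -k - 1
      · rw [if_neg (by omega), if_neg (by omega), if_pos (by omega), if_neg (by omega),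
          if_pos (by omega)]
        fin_cases s <;> fin_cases u <;>
          simp [sg, Bm, Fin.rev, Matrix.conjTranspose_apply, Complex.conj_ofReal, map_ofNat]
      · rw [if_neg (by omega), if_neg (by omega), if_neg (by omega),
          if_neg (by omega), if_neg (by omega), if_neg (by omega)]
        simp

lemma half (n : ℕ) (ξ : ℂ) (m ε : ℝ) (E : ℝ)
    (h : ∃ v : Fin (2 * n + 1) × Fin 2 → ℂ, v ≠ 0 ∧ (Hrep n ξ m ε).mulVec v = (E : ℂ) • v) :
    ∃ v : Fin (2 * n + 1) × Fin 2 → ℂ, v ≠ 0 ∧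
      (Hrep n ξ m ε).mulVec v = ((-E : ℝ) : ℂ) • v := by
  obtain ⟨v, hv0, hv⟩ := h
  refine ⟨fun p => sg p.2 * (starRingEnd ℂ) (v (p.1.rev, p.2.rev)), ?_, ?_⟩
  · intro hw
    apply hv0
    funext q
    have h1 := congrFun hw (q.1.rev, q.2.rev)
    simp only [Fin.rev_rev, Pi.zero_apply] at h1
    have h2 : (starRingEnd ℂ) (v (q.1, q.2)) = 0 := by
      rcases mul_eq_zero.mp h1 with h | h
      · exact absurd h (sg_ne_zero _)
      · exact h
    have := congrArg (starRingEnd ℂ) h2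
    simpa using this
  · funext p
    have hb : ∀ r : Fin (2 * n + 1) × Fin 2,
        Hrep n ξ m ε p (r.1.rev, r.2.rev) * sg r.2.rev
          = -(sg p.2 * (starRingEnd ℂ) (Hrep n ξ m ε (p.1.rev, p.2.rev) r)) := by
      intro r
      have hk := key_block ξ m ε ((p.1 : ℤ) - n) ((r.1 : ℤ) - n) p.2 r.2
      simp only [Hrep]
      rw [rev_val, rev_val]
      exact hk
    have hsum : (Hrep n ξ m ε).mulVec
          (fun p => sg p.2 * (starRingEnd ℂ) (v (p.1.rev, p.2.rev))) p
        = ∑ r : Fin (2 * n + 1) × Fin 2,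
            -(sg p.2 * ((starRingEnd ℂ) (Hrep n ξ m ε (p.1.rev, p.2.rev) r)
              * (starRingEnd ℂ) (v r))) := by
      rw [Matrix.mulVec, dotProduct]
      refine Fintype.sum_equiv (Equiv.prodCongr Fin.revPerm Fin.revPerm) _ _ ?_
      intro x
      simp only [Equiv.prodCongr_apply, Fin.revPerm_apply, Prod.map]
      have hbx := hb (x.1.rev, x.2.rev)
      simp only [Fin.rev_rev] at hbx
      calc Hrep n ξ m ε p x * (sg x.2 * (starRingEnd ℂ) (v (x.1.rev, x.2.rev)))
          = (Hrep n ξ m ε p (x.1, x.2) * sg x.2) * (starRingEnd ℂ) (v (x.1.rev, x.2.rev)) := by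
            ring
        _ = -(sg p.2 * ((starRingEnd ℂ) (Hrep n ξ m ε (p.1.rev, p.2.rev) (x.1.rev, x.2.rev))
              * (starRingEnd ℂ) (v (x.1.rev, x.2.rev)))) := by rw [hbx]; ring
    rw [hsum]
    have hvp := congrFun hv (p.1.rev, p.2.rev)
    simp only [Matrix.mulVec, dotProduct, Pi.smul_apply, smul_eq_mul] at hvp
    have step1 : ∑ r : Fin (2 * n + 1) × Fin 2,
          -(sg p.2 * ((starRingEnd ℂ) (Hrep n ξ m ε (p.1.rev, p.2.rev) r)
            * (starRingEnd ℂ) (v r)))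
        = -(sg p.2 * (starRingEnd ℂ)
            (∑ r : Fin (2 * n + 1) × Fin 2, Hrep n ξ m ε (p.1.rev, p.2.rev) r * v r)) := by
      rw [map_sum, Finset.mul_sum, ← Finset.sum_neg_distrib]
      refine Finset.sum_congr rfl fun r _ => ?_
      rw [RingHom.map_mul]
    rw [step1, hvp, RingHom.map_mul, Complex.conj_ofReal]
    simp only [Pi.smul_apply, smul_eq_mul]
    push_cast
    ring

/-- the spectrum of the Hermitian matrix `Ĥ_n(ξ)` is symmetric about zero:
a real `E` is an eigenvalue iff `-E` is an eigenvalue. -/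
theorem replica_spectrum_symmetric (n : ℕ) (ξ : ℂ) (m ε : ℝ) (E : ℝ) :
    (∃ v : Fin (2 * n + 1) × Fin 2 → ℂ, v ≠ 0 ∧ (Hrep n ξ m ε).mulVec v = (E : ℂ) • v) ↔
    (∃ v : Fin (2 * n + 1) × Fin 2 → ℂ, v ≠ 0 ∧ (Hrep n ξ m ε).mulVec v = ((-E : ℝ) : ℂ) • v) := by
  constructor
  · exact half n ξ m ε E
  · intro h
    have h' : ∃ v : Fin (2 * n + 1) × Fin 2 → ℂ, v ≠ 0 ∧
        (Hrep n ξ m ε).mulVec v = ((-E : ℝ) : ℂ) • v := h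
    have := half n ξ m ε (-E) (by simpa using h')
    simpa using this
end
end

section
/- Let m ∈ {1, −1}, let ξ ∈ ℂ with ξ ≠ 0, and let γ ∈ ℂ with γ² ≠ |ξ|². Then the 2×2 matrix γ·I₂ + ξ·σ is invertible and (γ·I₂ + ξ·σ)⁻¹ · B_m = −(|ξ|/(|ξ|² − γ²)) · ((γ/|ξ|)·B_m − ξ̂_m·Λ_m), where Λ_m := Λ₁ if m = 1 and Λ_m := Λ₋₁ if m = −1. -/
open Matrix Complex
open scoped Kronecker

noncomputable section

def Λ1 : Matrix (Fin 2) (Fin 2) ℂ := !![0, 0; 0, 1]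
def Λm1 : Matrix (Fin 2) (Fin 2) ℂ := !![1, 0; 0, 0]

/-- `Λ_m`: `Λ₁` if `m = 1`, `Λ₋₁` if `m = -1`. -/
def Lam (m : ℝ) : Matrix (Fin 2) (Fin 2) ℂ := if m = 1 then Λ1 else Λm1

/-- `ξ_m`: `ξ` if `m = 1`, `conj ξ` if `m = -1`. -/
def xiM (m : ℝ) (ξ : ℂ) : ℂ := if m = 1 then ξ else (starRingEnd ℂ) ξ

/-! Since `(ξ·σ)² = |ξ|²`, the matrix `γ - ξ·σ` inverts `γ + ξ·σ` up to the factor `γ² - |ξ|²`,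
and `ξ·σ` maps the single nonzero entry of `B_m` onto the diagonal: `ξ·σ B_m = ξ_m Λ_m`. -/

lemma xiSigma_mul_self (ξ : ℂ) : xiSigma ξ * xiSigma ξ = ((‖ξ‖ : ℂ) ^ 2) • 1 := by
  rw [xiSigma, mul_fin_two, ← mul_conj']
  ext i j; fin_cases i <;> fin_cases j <;> simp [mul_comm]

lemma smul_one_add_xiSigma_mul_smul_one_sub_xiSigma (γ ξ : ℂ) :
    (γ • 1 + xiSigma ξ) * (γ • 1 - xiSigma ξ) = (γ ^ 2 - (‖ξ‖ : ℂ) ^ 2) • 1 := by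
  simp only [add_mul, mul_sub, smul_one_mul, mul_smul_one, xiSigma_mul_self]
  module

lemma smul_one_add_xiSigma_mul_inv {γ ξ : ℂ} (hγ : γ ^ 2 ≠ (‖ξ‖ : ℂ) ^ 2) :
    (γ • 1 + xiSigma ξ) * ((γ ^ 2 - (‖ξ‖ : ℂ) ^ 2)⁻¹ • (γ • 1 - xiSigma ξ)) = 1 := by
  rw [mul_smul_comm, smul_one_add_xiSigma_mul_smul_one_sub_xiSigma, smul_smul,
    inv_mul_cancel₀ (sub_ne_zero.2 hγ), one_smul]

lemma xiSigma_mul_Bm {m : ℝ} (hm : m = 1 ∨ m = -1) (ξ : ℂ) :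
    xiSigma ξ * Bm m = xiM m ξ • Lam m := by
  rcases hm with rfl | rfl <;> norm_num [xiSigma, Bm, xiM, Lam, Λ1, Λm1]

/-- `(γ·I₂ + ξ·σ)` is invertible and
`(γ·I₂ + ξ·σ)⁻¹ B_m = -(|ξ|/(|ξ|²-γ²)) ((γ/|ξ|) B_m - ξ̂_m Λ_m)`. -/
theorem resolvent_Bm (m : ℝ) (hm : m = 1 ∨ m = -1) (ξ : ℂ) (hξ : ξ ≠ 0) (γ : ℂ)
    (hγ : γ ^ 2 ≠ ((‖ξ‖ : ℂ)) ^ 2) :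
    IsUnit (γ • (1 : Matrix (Fin 2) (Fin 2) ℂ) + xiSigma ξ) ∧
    (γ • (1 : Matrix (Fin 2) (Fin 2) ℂ) + xiSigma ξ)⁻¹ * Bm m
      = -(((‖ξ‖ : ℂ) / ((‖ξ‖ : ℂ) ^ 2 - γ ^ 2)) •
          ((γ / (‖ξ‖ : ℂ)) • Bm m - (xiM m ξ / (‖ξ‖ : ℂ)) • Lam m)) := by
  have hinv := smul_one_add_xiSigma_mul_inv hγ
  refine ⟨IsUnit.of_mul_eq_one _ hinv, ?_⟩
  have hn : (‖ξ‖ : ℂ) ≠ 0 := by simpa using hξ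
  rw [inv_eq_right_inv hinv, smul_mul_assoc, sub_mul, smul_one_mul, xiSigma_mul_Bm hm]
  match_scalars <;> field_simp <;> ring
end
end

section
/- Let m ∈ {1, −1}, let ℓ ≥ 1 be an integer, and let ξ ∈ ℂ with |ξ| ∉ {0, 1, …, ℓ−1}. Then, with the product taken over k = 1−ℓ, 2−ℓ, …, ℓ−1 in ascending order from left to right, (∏_{k=1−ℓ}^{ℓ−1} B_m · (k·I₂ + ξ·σ)⁻¹) · B_m = ξ̂_m^{2ℓ−1} · c(ξ) · B_m, where c(ξ) := ∏_{k=1−ℓ}^{ℓ−1} |ξ|/(|ξ|² − k²). -/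
open Matrix Complex
open scoped Kronecker

noncomputable section

/-- `ξ̂_m = ξ_m / |ξ|` where `ξ_m = ξ` if `m = 1` and `conj ξ` if `m = -1`. -/
def hatXiM (m : ℝ) (ξ : ℂ) : ℂ :=
  (if m = 1 then ξ else (starRingEnd ℂ) ξ) / (‖ξ‖ : ℂ)

/-!
For `m = ±1` the matrix `B_m` is a matrix unit `E`, and `E * M * E` is the scalar multiple of `E`
by a single entry of `M`. The product therefore collapses to the product of those entries of the
inverses `(k I₂ + ξ·σ)⁻¹`, which the adjugate formula gives as `ξ_m / (|ξ|² - k²)`.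
-/

lemma list_prod_map_mul_mul_eq_prod_smul {R A : Type*} [CommSemiring R] [Semiring A]
    [Algebra R A] (B : A) (M : ℕ → A) (c : ℕ → R) (h : ∀ i, B * M i * B = c i • B) (n : ℕ) :
    ((List.range n).map (fun i => B * M i)).prod * B = (∏ i ∈ Finset.range n, c i) • B := by
  induction n with
  | zero => simp
  | succ n ih =>
    rw [List.range_succ, List.map_append, List.prod_append, List.map_singleton,
      List.prod_singleton, mul_assoc, h, mul_smul_comm, ih, smul_smul,
      Finset.prod_range_succ, mul_comm]

lemma Bm_one : Bm 1 = !![0, 1; 0, 0] := by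
  norm_num [Bm]

lemma Bm_neg_one : Bm (-1) = !![0, 0; 1, 0] := by
  norm_num [Bm]

lemma Bm_mul_mul_Bm {m : ℝ} (hm : m = 1 ∨ m = -1) (M : Matrix (Fin 2) (Fin 2) ℂ) :
    Bm m * M * Bm m = (if m = 1 then M 1 0 else M 0 1) • Bm m := by
  rw [Matrix.eta_fin_two M]
  rcases hm with rfl | rfl <;>
  · ext i j
    fin_cases i <;> fin_cases j <;> norm_num [Bm_one, Bm_neg_one, Matrix.mul_apply]

lemma det_smul_one_add_xiSigma (k ξ : ℂ) :
    (k • (1 : Matrix (Fin 2) (Fin 2) ℂ) + xiSigma ξ).det = k ^ 2 - (‖ξ‖ : ℂ) ^ 2 := by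
  rw [Matrix.det_fin_two, ← Complex.conj_mul']
  simp [xiSigma]
  ring

-- `Matrix.inv_def` is stated with `Ring.inverse`, so this also holds, as `0 = 0`, when `|ξ|² = k²`.
lemma inv_smul_one_add_xiSigma_apply_one_zero (k ξ : ℂ) :
    (k • (1 : Matrix (Fin 2) (Fin 2) ℂ) + xiSigma ξ)⁻¹ 1 0 = ξ / ((‖ξ‖ : ℂ) ^ 2 - k ^ 2) := by
  rw [Matrix.inv_def, det_smul_one_add_xiSigma, Ring.inverse_eq_inv', Matrix.adjugate_fin_two]
  simp [xiSigma]
  rw [← neg_sub, inv_neg]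
  ring

lemma inv_smul_one_add_xiSigma_apply_zero_one (k ξ : ℂ) :
    (k • (1 : Matrix (Fin 2) (Fin 2) ℂ) + xiSigma ξ)⁻¹ 0 1 =
      starRingEnd ℂ ξ / ((‖ξ‖ : ℂ) ^ 2 - k ^ 2) := by
  rw [Matrix.inv_def, det_smul_one_add_xiSigma, Ring.inverse_eq_inv', Matrix.adjugate_fin_two]
  simp [xiSigma]
  rw [← neg_sub, inv_neg]
  ring

lemma div_eq_div_norm_mul_norm_div {z : ℂ} (ξ : ℂ) (hz : ξ = 0 → z = 0) (d : ℂ) :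
    z / d = z / ‖ξ‖ * (‖ξ‖ / d) := by
  by_cases hξ : ξ = 0
  · simp [hz hξ]
  · rw [div_mul_div_cancel₀ (by simpa using hξ)]

lemma Bm_mul_inv_smul_one_add_xiSigma_mul_Bm {m : ℝ} (hm : m = 1 ∨ m = -1) (k : ℝ) (ξ : ℂ) :
    Bm m * ((k : ℂ) • (1 : Matrix (Fin 2) (Fin 2) ℂ) + xiSigma ξ)⁻¹ * Bm m
      = (hatXiM m ξ * ((‖ξ‖ / (‖ξ‖ ^ 2 - k ^ 2) : ℝ) : ℂ)) • Bm m := by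
  have hξm := div_eq_div_norm_mul_norm_div (z := if m = 1 then ξ else starRingEnd ℂ ξ) ξ
    (by rintro rfl; simp) ((‖ξ‖ : ℂ) ^ 2 - k ^ 2)
  rw [Bm_mul_mul_Bm hm, inv_smul_one_add_xiSigma_apply_one_zero,
    inv_smul_one_add_xiSigma_apply_zero_one,
    ← apply_ite (fun z => z / ((‖ξ‖ : ℂ) ^ 2 - k ^ 2)), hξm, hatXiM]
  push_cast
  rfl

theorem product_formula_general (m : ℝ) (hm : m = 1 ∨ m = -1) (ℓ : ℕ) (ξ : ℂ) :
    ((List.range (2 * ℓ - 1)).map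
        (fun i => Bm m * (((((i : ℤ) + 1 - (ℓ : ℤ)) : ℤ) : ℂ) •
          (1 : Matrix (Fin 2) (Fin 2) ℂ) + xiSigma ξ)⁻¹)).prod * Bm m
      = ((hatXiM m ξ) ^ (2 * ℓ - 1) *
          ((∏ i ∈ Finset.range (2 * ℓ - 1),
              (‖ξ‖ / ((‖ξ‖) ^ 2 - ((((i : ℤ) + 1 - (ℓ : ℤ)) : ℤ) : ℝ) ^ 2)
              ) : ℝ) : ℂ)) • Bm m := by
  simp only [bind_pure_comp, List.map_eq_map, List.map_map, Function.comp_def]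
  rw [list_prod_map_mul_mul_eq_prod_smul _ _ _
    (fun i => by simpa using Bm_mul_inv_smul_one_add_xiSigma_mul_Bm hm ((i : ℤ) + 1 - ℓ : ℤ) ξ),
    Finset.prod_mul_distrib, Finset.prod_const, Finset.card_range]
  push_cast
  rfl

/-- with the product over `k = 1-ℓ, …, ℓ-1` in ascending order,
`(∏ B_m (k I₂ + ξ·σ)⁻¹) B_m = ξ̂_m^{2ℓ-1} c(ξ) B_m` with
`c(ξ) = ∏_{k=1-ℓ}^{ℓ-1} |ξ|/(|ξ|² - k²)`. -/
theorem product_formula (m : ℝ) (hm : m = 1 ∨ m = -1) (ℓ : ℕ) (hℓ : 1 ≤ ℓ) (ξ : ℂ)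
    (hξ : ∀ j : ℕ, j ≤ ℓ - 1 → ‖ξ‖ ≠ (j : ℝ)) :
    ((List.range (2 * ℓ - 1)).map
        (fun i => Bm m * (((((i : ℤ) + 1 - (ℓ : ℤ)) : ℤ) : ℂ) •
          (1 : Matrix (Fin 2) (Fin 2) ℂ) + xiSigma ξ)⁻¹)).prod * Bm m
      = ((hatXiM m ξ) ^ (2 * ℓ - 1) *
          ((∏ i ∈ Finset.range (2 * ℓ - 1),
              (‖ξ‖ / ((‖ξ‖) ^ 2 - ((((i : ℤ) + 1 - (ℓ : ℤ)) : ℤ) : ℝ) ^ 2)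
              ) : ℝ) : ℂ)) • Bm m :=
  product_formula_general m hm ℓ ξ
end
end

section
/- (Schur complement identity for the 3-replica bulk Hamiltonian.) Let ξ ∈ ℂ, m, ε ∈ ℝ, write B := B_m, and let Ĥ₁(ξ) be the 6×6 matrix with 2×2 blocks indexed by k, k' ∈ {1, 0, −1}: diagonal blocks k·I₂ + ξ·σ, blocks (k, k−1) equal to εB, blocks (k, k+1) equal to εB*, other blocks zero. Let z ∈ ℂ be such that (z−1)² ≠ |ξ|², (z+1)² ≠ |ξ|², and such that the 2×2 matrix S(z) := z·I₂ − ξ·σ − ε²·(B*·((z−1)·I₂ − ξ·σ)⁻¹·B + B·((z+1)·I₂ − ξ·σ)⁻¹·B*) is invertible. Then z·I₆ − Ĥ₁(ξ) is invertible and the central 2×2 block (block index (0,0)) of (z·I₆ − Ĥ₁(ξ))⁻¹ equals S(z)⁻¹. -/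
open Matrix Complex
open scoped Kronecker

noncomputable section

/-!
Reorder the six coordinates so that the central replica comes first. Then `z - Ĥ₁(ξ)` is a
2×2 block matrix whose lower-right block is `diag((z+1) - ξ·σ, (z-1) - ξ·σ)`, invertible because
`det (a - ξ·σ) = a² - |ξ|²`, and whose Schur complement with respect to that block is exactly
`S(z)`. The block-inverse formula then makes `z - Ĥ₁(ξ)` invertible with top-left block `S(z)⁻¹`.
-/

namespace Matrix

variable {m n α : Type*} [Fintype m] [Fintype n] [DecidableEq m] [DecidableEq n] [CommRing α]

theorem isUnit_fromBlocks_of_isUnit₂₂ {A : Matrix m m α} {B : Matrix m n α}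
    {C : Matrix n m α} {D : Matrix n n α} (hD : IsUnit D) (hS : IsUnit (A - B * D⁻¹ * C)) :
    IsUnit (fromBlocks A B C D) := by
  cases hD.nonempty_invertible
  rw [← invOf_eq_nonsing_inv D] at hS
  exact isUnit_fromBlocks_iff_of_invertible₂₂.mpr hS

theorem toBlocks₁₁_inv_fromBlocks_of_isUnit₂₂ {A : Matrix m m α} {B : Matrix m n α}
    {C : Matrix n m α} {D : Matrix n n α} (hD : IsUnit D) (hS : IsUnit (A - B * D⁻¹ * C)) :
    (fromBlocks A B C D)⁻¹.toBlocks₁₁ = (A - B * D⁻¹ * C)⁻¹ := by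
  cases hD.nonempty_invertible
  rw [← invOf_eq_nonsing_inv D] at hS ⊢
  cases hS.nonempty_invertible
  let := fromBlocks₂₂Invertible A B C D
  rw [← invOf_eq_nonsing_inv, ← invOf_eq_nonsing_inv, invOf_fromBlocks₂₂_eq, toBlocks_fromBlocks₁₁]

theorem fromCols_mul_inv_fromBlocks_zero_mul_fromRows {l : Type*} (B₁ : Matrix l m α)
    (B₂ : Matrix l n α) (C₁ : Matrix m l α) (C₂ : Matrix n l α) {D₁ : Matrix m m α}
    {D₂ : Matrix n n α} (hD : IsUnit D₁ ↔ IsUnit D₂) :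
    fromCols B₁ B₂ * (fromBlocks D₁ 0 0 D₂)⁻¹ * fromRows C₁ C₂ =
      B₁ * D₁⁻¹ * C₁ + B₂ * D₂⁻¹ * C₂ := by
  rw [inv_fromBlocks_zero₂₁_of_isUnit_iff _ _ _ hD, fromCols_mul_fromBlocks,
    fromCols_mul_fromRows]
  simp

end Matrix

theorem det_smul_one_sub_xiSigma (a ξ : ℂ) :
    (a • (1 : Matrix (Fin 2) (Fin 2) ℂ) - xiSigma ξ).det = a ^ 2 - (‖ξ‖ : ℂ) ^ 2 := by
  rw [← ofReal_pow, Complex.sq_norm, normSq_eq_conj_mul_self]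
  simp [xiSigma, det_fin_two, sq]

theorem isUnit_smul_one_sub_xiSigma {a ξ : ℂ} (h : a ^ 2 ≠ (‖ξ‖ : ℂ) ^ 2) :
    IsUnit (a • (1 : Matrix (Fin 2) (Fin 2) ℂ) - xiSigma ξ) := by
  rw [isUnit_iff_isUnit_det, det_smul_one_sub_xiSigma, isUnit_iff_ne_zero]
  exact sub_ne_zero_of_ne h

/-- Replica `k` sits at block `j = k + 1`; the central replica `k = 0` is sent to `inl`. -/
def centreFirstEquiv : Fin 3 × Fin 2 ≃ Fin 2 ⊕ (Fin 2 ⊕ Fin 2) where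
  toFun p := if p.1 = 1 then .inl p.2 else if p.1 = 0 then .inr (.inl p.2) else .inr (.inr p.2)
  invFun
    | .inl a => (1, a)
    | .inr (.inl a) => (0, a)
    | .inr (.inr a) => (2, a)
  left_inv := by decide
  right_inv := by decide

theorem smul_one_sub_Hrep_one (z ξ : ℂ) (m ε : ℝ) :
    z • (1 : Matrix (Fin (2 * 1 + 1) × Fin 2) (Fin (2 * 1 + 1) × Fin 2) ℂ) - Hrep 1 ξ m ε =
      (fromBlocks (z • 1 - xiSigma ξ) (fromCols (-((ε : ℂ) • Bm m)) (-((ε : ℂ) • (Bm m)ᴴ)))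
        (fromRows (-((ε : ℂ) • (Bm m)ᴴ)) (-((ε : ℂ) • Bm m)))
        (fromBlocks ((z + 1) • 1 - xiSigma ξ) 0 0 ((z - 1) • 1 - xiSigma ξ))).submatrix
        centreFirstEquiv centreFirstEquiv := by
  ext ⟨i, a⟩ ⟨j, b⟩
  fin_cases i <;> fin_cases j <;>
    simp [Hrep, replicaBlock, centreFirstEquiv, one_apply, Prod.ext_iff, Fin.ext_iff,
      -Fin.val_eq_zero_iff] <;>
    split_ifs <;> ring

/-- Schur complement identity for the 3-replica bulk Hamiltonian:
if `(z∓1)² ≠ |ξ|²` and the Schur complement `S(z)` is invertible, then `z I₆ - Ĥ₁(ξ)` is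
invertible and the central `2×2` block of its inverse is `S(z)⁻¹`. -/
theorem schur_central_block (ξ : ℂ) (m ε : ℝ) (z : ℂ)
    (h1 : (z - 1) ^ 2 ≠ ((‖ξ‖ : ℂ)) ^ 2)
    (h2 : (z + 1) ^ 2 ≠ ((‖ξ‖ : ℂ)) ^ 2)
    (S : Matrix (Fin 2) (Fin 2) ℂ)
    (hS : S = z • (1 : Matrix (Fin 2) (Fin 2) ℂ) - xiSigma ξ -
        ((ε : ℂ)) ^ 2 •
          ((Bm m)ᴴ * ((z - 1) • (1 : Matrix (Fin 2) (Fin 2) ℂ) - xiSigma ξ)⁻¹ * Bm m +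
            Bm m * ((z + 1) • (1 : Matrix (Fin 2) (Fin 2) ℂ) - xiSigma ξ)⁻¹ * (Bm m)ᴴ))
    (hSinv : IsUnit S) :
    IsUnit (z • (1 : Matrix (Fin (2 * 1 + 1) × Fin 2) (Fin (2 * 1 + 1) × Fin 2) ℂ)
        - Hrep 1 ξ m ε) ∧
    ∀ i j : Fin 2,
      (z • (1 : Matrix (Fin (2 * 1 + 1) × Fin 2) (Fin (2 * 1 + 1) × Fin 2) ℂ)
          - Hrep 1 ξ m ε)⁻¹ ((1 : Fin (2 * 1 + 1)), i) ((1 : Fin (2 * 1 + 1)), j)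
        = S⁻¹ i j := by
  have hD₁ := isUnit_smul_one_sub_xiSigma h2
  have hD₂ := isUnit_smul_one_sub_xiSigma h1
  have hSchur : z • 1 - xiSigma ξ - fromCols (-((ε : ℂ) • Bm m)) (-((ε : ℂ) • (Bm m)ᴴ)) *
      (fromBlocks ((z + 1) • 1 - xiSigma ξ) 0 0 ((z - 1) • 1 - xiSigma ξ))⁻¹ *
      fromRows (-((ε : ℂ) • (Bm m)ᴴ)) (-((ε : ℂ) • Bm m)) = S := by
    rw [fromCols_mul_inv_fromBlocks_zero_mul_fromRows _ _ _ _ (iff_of_true hD₁ hD₂), hS]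
    simp only [Matrix.neg_mul, Matrix.mul_neg, Matrix.smul_mul, Matrix.mul_smul]
    module
  have hD := (isUnit_fromBlocks_zero₂₁ (B := 0)).mpr ⟨hD₁, hD₂⟩
  rw [← hSchur] at hSinv
  have hblock := toBlocks₁₁_inv_fromBlocks_of_isUnit₂₂ hD hSinv
  rw [hSchur] at hblock
  rw [smul_one_sub_Hrep_one, isUnit_submatrix_equiv, inv_submatrix_equiv]
  exact ⟨isUnit_fromBlocks_of_isUnit₂₂ hD hSinv, fun i j => congr_fun₂ hblock i j⟩
end
end

section
/- Let p ∈ ℤ, φ ∈ ℝ, τ ∈ ℝ, r ∈ ℝ, and define H(r,θ) := cos(pθ+φ)·σ₁ + sin(pθ+φ)·σ₂ + τr·σ₃ for θ ∈ ℝ. Then ∂_r H = τσ₃, ∂_θ H = −p sin(pθ+φ)·σ₁ + p cos(pθ+φ)·σ₂, and ∫₀^{2π} tr( H(r,θ) · [∂_r H, ∂_θ H(r,θ)] ) dθ = −8πi p τ, where [A,B] = AB − BA and tr is the matrix trace. In particular the integral is independent of r and of the phase φ. -/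
open Matrix Complex
open scoped Kronecker

noncomputable section

attribute [local instance] Matrix.normedAddCommGroup Matrix.normedSpace

/-- The limiting 2×2 Hamiltonian `H(r,θ) = cos(pθ+φ)σ₁ + sin(pθ+φ)σ₂ + τr σ₃`. -/
def Hring (p : ℤ) (φ τ : ℝ) (r θ : ℝ) : Matrix (Fin 2) (Fin 2) ℂ :=
  (Real.cos (p * θ + φ) : ℂ) • σ1 + (Real.sin (p * θ + φ) : ℂ) • σ2 +
    ((τ * r : ℝ) : ℂ) • σ3

/-- `∂_θ H(r,θ) = -p sin(pθ+φ) σ₁ + p cos(pθ+φ) σ₂`. -/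
def HringDθ (p : ℤ) (φ : ℝ) (θ : ℝ) : Matrix (Fin 2) (Fin 2) ℂ :=
  ((-(p : ℝ) * Real.sin (p * θ + φ) : ℝ) : ℂ) • σ1 +
    (((p : ℝ) * Real.cos (p * θ + φ) : ℝ) : ℂ) • σ2


lemma trace_const (p : ℤ) (φ τ r θ : ℝ) :
    Matrix.trace (Hring p φ τ r θ *
        (((τ : ℂ) • σ3) * HringDθ p φ θ - HringDθ p φ θ * ((τ : ℂ) • σ3)))
      = -4 * Complex.I * (p : ℂ) * (τ : ℂ) := by
  have h := Real.sin_sq_add_cos_sq (p * θ + φ)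
  simp only [Hring, HringDθ, σ1, σ2, σ3, Matrix.trace_fin_two, Matrix.sub_apply,
    Matrix.mul_apply, Fin.sum_univ_two, Matrix.add_apply, Matrix.smul_apply,
    smul_eq_mul, Matrix.cons_val', Matrix.cons_val_zero, Matrix.cons_val_one,
    Matrix.head_cons, Matrix.head_fin_const, Matrix.empty_val',
    Matrix.cons_val_fin_one]
  push_cast
  norm_num [Matrix.cons_val_zero, Matrix.cons_val_one, Matrix.head_cons, Matrix.head_fin_const, Matrix.cons_val', Matrix.empty_val', Matrix.cons_val_fin_one, Matrix.of_apply]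
  have h' : (Real.sin (p * θ + φ) : ℂ)^2 + (Real.cos (p * θ + φ) : ℂ)^2 = 1 := by
    exact_mod_cast congrArg (Complex.ofReal) h
  simp only [Complex.ofReal_sin, Complex.ofReal_cos, Complex.ofReal_add, Complex.ofReal_mul, Complex.ofReal_intCast] at h'
  linear_combination (-4 * Complex.I * (p : ℂ) * (τ : ℂ)) * h' 

/-- `∂_r H = τσ₃`, `∂_θ H = -p sin(pθ+φ)σ₁ + p cos(pθ+φ)σ₂`, and
`∫₀^{2π} tr(H [∂_r H, ∂_θ H]) dθ = -8πipτ`, independently of `r` and `φ`. -/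
theorem ring_hamiltonian_trace_integral (p : ℤ) (φ τ : ℝ) :
    (∀ r θ : ℝ, HasDerivAt (fun r' => Hring p φ τ r' θ) ((τ : ℂ) • σ3) r) ∧
    (∀ r θ : ℝ, HasDerivAt (fun θ' => Hring p φ τ r θ') (HringDθ p φ θ) θ) ∧
    (∀ r : ℝ,
      (∫ θ in (0 : ℝ)..(2 * Real.pi),
          Matrix.trace (Hring p φ τ r θ *
            (((τ : ℂ) • σ3) * HringDθ p φ θ - HringDθ p φ θ * ((τ : ℂ) • σ3))))
        = -8 * (Real.pi : ℂ) * Complex.I * (p : ℂ) * (τ : ℂ)) := by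
  refine ⟨?_, ?_, ?_⟩
  · intro r θ
    have h1 : HasDerivAt (fun r' : ℝ => ((τ * r' : ℝ) : ℂ)) (τ : ℂ) r := by
      have := ((hasDerivAt_id r).const_mul τ).ofReal_comp
      simpa using this
    have h2 := h1.smul_const σ3
    have h3 := ((hasDerivAt_const r ((Real.cos (p * θ + φ) : ℂ) • σ1)).add
      (hasDerivAt_const r ((Real.sin (p * θ + φ) : ℂ) • σ2))).add h2
    have h4 := h3
    rw [zero_add, zero_add] at h4
    exact h4
  · intro r θ
    have hlin : HasDerivAt (fun θ' : ℝ => (p : ℝ) * θ' + φ) (p : ℝ) θ := by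
      simpa using ((hasDerivAt_id θ).const_mul (p : ℝ)).add_const φ
    have hc : HasDerivAt (fun θ' : ℝ => Real.cos ((p : ℝ) * θ' + φ))
        (-Real.sin ((p : ℝ) * θ + φ) * (p : ℝ)) θ :=
      (Real.hasDerivAt_cos _).comp θ hlin
    have hs : HasDerivAt (fun θ' : ℝ => Real.sin ((p : ℝ) * θ' + φ))
        (Real.cos ((p : ℝ) * θ + φ) * (p : ℝ)) θ :=
      (Real.hasDerivAt_sin _).comp θ hlin
    have h1 := (hc.ofReal_comp.smul_const σ1).add (hs.ofReal_comp.smul_const σ2)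
    have h2 := h1.add (hasDerivAt_const θ (((τ * r : ℝ) : ℂ) • σ3))
    have heq : HringDθ p φ θ =
        ((-Real.sin ((p : ℝ) * θ + φ) * (p : ℝ) : ℝ) : ℂ) • σ1 +
          ((Real.cos ((p : ℝ) * θ + φ) * (p : ℝ) : ℝ) : ℂ) • σ2 + 0 := by
      simp [HringDθ]; ring_nf
    rw [heq]
    exact h2
  · intro r
    have : (∫ θ in (0 : ℝ)..(2 * Real.pi),
        Matrix.trace (Hring p φ τ r θ *
          (((τ : ℂ) • σ3) * HringDθ p φ θ - HringDθ p φ θ * ((τ : ℂ) • σ3))))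
        = ∫ _ in (0 : ℝ)..(2 * Real.pi), (-4 * Complex.I * (p : ℂ) * (τ : ℂ)) := by
      refine intervalIntegral.integral_congr fun θ _ => ?_
      exact trace_const p φ τ r θ
    rw [this, intervalIntegral.integral_const, Complex.real_smul]
    push_cast
    ring
end
end

section
/- Let p ∈ ℤ, φ ∈ ℝ, and τ ∈ ℝ with τ ≠ 0, and define H(r,θ) := cos(pθ+φ)·σ₁ + sin(pθ+φ)·σ₂ + τr·σ₃, so that ∂_r H = τσ₃ and ∂_θ H = −p sin(pθ+φ)·σ₁ + p cos(pθ+φ)·σ₂. Then the curvature integral (i/(2π)) · ∫_ℝ ∫₀^{2π} ( −1/(8(1+τ²r²)^{3/2}) ) · tr( H(r,θ) · [∂_r H, ∂_θ H(r,θ)] ) dθ dr = −p · sign(τ). -/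
open Matrix Complex
open scoped Kronecker

noncomputable section

open MeasureTheory Filter Real Set in
lemma hasDeriv_F (x : ℝ) : HasDerivAt (fun y : ℝ => y / Real.sqrt (1 + y^2))
    (1 / (1 + x^2) ^ ((3:ℝ)/2)) x := by
  have hpos : 0 < 1 + x^2 := by positivity
  have h1 : HasDerivAt (fun y : ℝ => 1 + y^2) (2*x) x := by
    simpa using ((hasDerivAt_pow 2 x).const_add 1)
  have h2 : HasDerivAt (fun y : ℝ => Real.sqrt (1 + y^2))
      ((Real.sqrt (1 + x^2))⁻¹ * 2⁻¹ * (2*x)) x := by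
    exact ((Real.hasDerivAt_sqrt hpos.ne').comp x h1).congr_deriv (by ring)
  have hs : Real.sqrt (1 + x^2) ≠ 0 := (Real.sqrt_pos.mpr hpos).ne'
  have h3 := (hasDerivAt_id x).div h2 hs
  refine h3.congr_deriv ?_
  symm
  have hsq : Real.sqrt (1 + x^2) ^ 2 = 1 + x^2 := Real.sq_sqrt hpos.le
  have hrpow : (1 + x^2) ^ ((3:ℝ)/2) = (1 + x^2) * Real.sqrt (1 + x^2) := by
    rw [show ((3:ℝ)/2) = 1 + 1/2 by norm_num, Real.rpow_add hpos, Real.rpow_one,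
      ← Real.sqrt_eq_rpow]
  rw [hrpow]
  set s := Real.sqrt (1 + x^2) with hs_def
  field_simp
  simp only [id]
  linear_combination (-x^2) * hsq

open MeasureTheory Filter Real Set in
lemma tendsto_F : Tendsto (fun y : ℝ => y / Real.sqrt (1 + y^2)) atTop (nhds 1) := by
  have hi : Tendsto (fun y : ℝ => y⁻¹) atTop (nhds 0) := tendsto_inv_atTop_zero
  have h0 : Tendsto (fun y : ℝ => (y⁻¹)^2 + 1) atTop (nhds 1) := by
    have := (hi.pow 2).add_const 1
    norm_num at this; convert this using 2 <;> simp [pow_two]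
  have h1 : Tendsto (fun y : ℝ => 1 / Real.sqrt ((y⁻¹)^2 + 1)) atTop (nhds 1) := by
    have h2 := (Real.continuous_sqrt.tendsto 1).comp h0
    have h3 := h2.inv₀ (by simp)
    simpa [Function.comp] using h3
  refine h1.congr' ?_
  filter_upwards [eventually_gt_atTop 0] with y hy
  have hsy : 0 < Real.sqrt (1 + y^2) := Real.sqrt_pos.mpr (by positivity)
  have hsy2 : 0 < Real.sqrt ((y⁻¹)^2 + 1) := Real.sqrt_pos.mpr (by positivity)
  rw [div_eq_div_iff hsy2.ne' hsy.ne', one_mul,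
    show (y⁻¹)^2 + 1 = (1 + y^2) / y^2 by field_simp,
    Real.sqrt_div (by positivity) (y^2), Real.sqrt_sq hy.le]
  field_simp

open MeasureTheory Filter Real Set in
lemma integral_Ioi_base : ∫ x in Ioi (0:ℝ), 1 / (1 + x^2) ^ ((3:ℝ)/2) = 1 := by
  have := integral_Ioi_of_hasDerivAt_of_nonneg (g := fun y : ℝ => y / Real.sqrt (1 + y^2))
    (a := 0) (l := 1) (hasDeriv_F 0).continuousAt.continuousWithinAt
    (fun x _ => hasDeriv_F x) (fun x _ => by positivity) tendsto_F
  simpa using this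

open MeasureTheory Filter Real Set in
lemma integrableOn_Ioi_base : IntegrableOn (fun x : ℝ => 1 / (1 + x^2) ^ ((3:ℝ)/2)) (Ioi 0) :=
  integrableOn_Ioi_deriv_of_nonneg (hasDeriv_F 0).continuousAt.continuousWithinAt
    (fun x _ => hasDeriv_F x) (fun x _ => by positivity) tendsto_F

open MeasureTheory Filter Real Set in
lemma integrableOn_Iic_base : IntegrableOn (fun x : ℝ => 1 / (1 + x^2) ^ ((3:ℝ)/2)) (Iic 0) := by
  rw [← (Measure.measurePreserving_neg (volume : Measure ℝ)).integrableOn_comp_preimage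
      (Homeomorph.neg ℝ).measurableEmbedding]
  simpa [Function.comp_def, integrableOn_Ici_iff_integrableOn_Ioi]
    using integrableOn_Ioi_base

open MeasureTheory Filter Real Set in
lemma integral_base : ∫ x : ℝ, 1 / (1 + x^2) ^ ((3:ℝ)/2) = 2 := by
  have hI : ∫ x in Iic (0:ℝ), 1 / (1 + x^2) ^ ((3:ℝ)/2) = 1 := by
    rw [← neg_zero, ← integral_comp_neg_Ioi]
    simpa only [neg_sq] using integral_Ioi_base
  rw [← intervalIntegral.integral_Iic_add_Ioi integrableOn_Iic_base integrableOn_Ioi_base,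
    hI, integral_Ioi_base]
  norm_num

lemma trace_comm (p : ℤ) (φ τ r θ : ℝ) :
    Matrix.trace (Hring p φ τ r θ *
      (((τ : ℂ) • σ3) * HringDθ p φ θ - HringDθ p φ θ * ((τ : ℂ) • σ3)))
    = -4 * Complex.I * τ * p := by
  have h : (Real.sin (p*θ+φ) : ℂ)^2 + (Real.cos (p*θ+φ) : ℂ)^2 = 1 := by
    exact_mod_cast Real.sin_sq_add_cos_sq (p*θ+φ)
  simp only [Hring, HringDθ, σ1, σ2, σ3, Matrix.trace_fin_two, Matrix.sub_apply,
    Matrix.mul_apply, Matrix.add_apply, Matrix.smul_apply, Fin.sum_univ_two,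
    Matrix.cons_val', Matrix.cons_val_zero, Matrix.cons_val_one, Matrix.head_cons,
    Matrix.empty_val', Matrix.cons_val_fin_one, Matrix.head_fin_const, Matrix.of_apply,
    smul_eq_mul]
  push_cast [Complex.ofReal_cos, Complex.ofReal_sin] at h ⊢
  ring_nf
  linear_combination (-4 * Complex.I * τ * p) * h


open MeasureTheory in
/-- the curvature (winding-number) integral of the ring Hamiltonian equals
`-p·sign(τ)`. -/
theorem ring_winding_number (p : ℤ) (φ τ : ℝ) (hτ : τ ≠ 0) :
    Complex.I / (2 * (Real.pi : ℂ)) *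
        ∫ r : ℝ,
          (∫ θ in (0 : ℝ)..(2 * Real.pi),
            (((-1 : ℝ) / (8 * (1 + τ ^ 2 * r ^ 2) ^ ((3 : ℝ) / 2)) : ℝ) : ℂ) *
              Matrix.trace (Hring p φ τ r θ *
                (((τ : ℂ) • σ3) * HringDθ p φ θ - HringDθ p φ θ * ((τ : ℂ) • σ3))))
      = -(p : ℂ) * ((Real.sign τ : ℝ) : ℂ) := by
  have hint : ∫ r : ℝ, 1 / (1 + τ^2*r^2) ^ ((3:ℝ)/2) = 2 / |τ| := by
    have h := MeasureTheory.Measure.integral_comp_mul_left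
      (fun x : ℝ => 1 / (1 + x^2) ^ ((3:ℝ)/2)) τ
    simp only [mul_pow, integral_base, smul_eq_mul, abs_inv] at h
    rw [h]; field_simp
  have hbody : ∀ r : ℝ,
      (∫ θ in (0 : ℝ)..(2 * Real.pi),
        (((-1 : ℝ) / (8 * (1 + τ ^ 2 * r ^ 2) ^ ((3 : ℝ) / 2)) : ℝ) : ℂ) *
          Matrix.trace (Hring p φ τ r θ *
            (((τ : ℂ) • σ3) * HringDθ p φ θ - HringDθ p φ θ * ((τ : ℂ) • σ3))))
      = ((Real.pi : ℂ) * Complex.I * τ * p) *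
          ((1 / (1 + τ^2*r^2) ^ ((3:ℝ)/2) : ℝ) : ℂ) := by
    intro r
    have hc : ∀ θ ∈ Set.uIcc (0:ℝ) (2*Real.pi),
        (((-1 : ℝ) / (8 * (1 + τ ^ 2 * r ^ 2) ^ ((3 : ℝ) / 2)) : ℝ) : ℂ) *
          Matrix.trace (Hring p φ τ r θ *
            (((τ : ℂ) • σ3) * HringDθ p φ θ - HringDθ p φ θ * ((τ : ℂ) • σ3)))
        = (((-1 : ℝ) / (8 * (1 + τ ^ 2 * r ^ 2) ^ ((3 : ℝ) / 2)) : ℝ) : ℂ) *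
            (-4 * Complex.I * τ * p) := fun θ _ => by rw [trace_comm]
    rw [intervalIntegral.integral_congr hc, intervalIntegral.integral_const]
    have hg : ((1 + τ^2*r^2 : ℝ) ^ ((3:ℝ)/2) : ℝ) ≠ 0 := by positivity
    rw [sub_zero, Complex.real_smul]
    push_cast
    field_simp
    ring
  rw [integral_congr_ae (Filter.Eventually.of_forall hbody), integral_const_mul]
  have hcast : ∫ a : ℝ, ((1 / (1 + τ^2*a^2) ^ ((3:ℝ)/2) : ℝ) : ℂ) = ((2/|τ| : ℝ) : ℂ) := by
    rw [← hint]
    exact integral_ofReal (𝕜 := ℂ) (f := fun a : ℝ => 1 / (1 + τ^2*a^2) ^ ((3:ℝ)/2))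
  rw [hcast]
  have habs : |τ| ≠ 0 := abs_ne_zero.mpr hτ
  have hsign : (Real.sign τ) * |τ| = τ := by
    rcases lt_or_gt_of_ne hτ with h | h
    · rw [Real.sign_of_neg h, abs_of_neg h]; ring
    · rw [Real.sign_of_pos h, abs_of_pos h, one_mul]
  have hπ : (Real.pi : ℂ) ≠ 0 := Complex.ofReal_ne_zero.mpr Real.pi_ne_zero
  have habsC : ((|τ| : ℝ) : ℂ) ≠ 0 := Complex.ofReal_ne_zero.mpr habs
  have hsC : ((Real.sign τ : ℝ) : ℂ) * ((|τ| : ℝ) : ℂ) = (τ : ℂ) := by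
    exact_mod_cast congrArg (Complex.ofReal) hsign
  push_cast
  field_simp
  linear_combination (p:ℂ) * hsC + ((τ:ℂ) * (p:ℂ)) * Complex.I_sq
end
end

section
/- Let μ ∈ ℝ with μ ≠ 0, and define H(ξ) := ξ₁σ₁ + ξ₂σ₂ + μσ₃ for ξ = (ξ₁,ξ₂) ∈ ℝ², so that ∂₁H = σ₁ and ∂₂H = σ₂. Then (i/(2π)) · ∫_{ℝ²} ( −1/(8(|ξ|² + μ²)^{3/2}) ) · tr( H(ξ) · [σ₁, σ₂] ) dξ = sign(μ)/2. (This computes the bulk winding-number invariant of the massive Dirac Hamiltonian ξ·σ + μσ₃; applied with μ = −mε² it yields the value −sign(m)/2 used for the contribution near ξ = 0.) -/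
open Matrix Complex
open scoped Kronecker

noncomputable section

/-- The massive Dirac Hamiltonian `H(ξ) = ξ₁σ₁ + ξ₂σ₂ + μσ₃`. -/
def Hdirac (μ : ℝ) (ξ : ℝ × ℝ) : Matrix (Fin 2) (Fin 2) ℂ :=
  (ξ.1 : ℂ) • σ1 + (ξ.2 : ℂ) • σ2 + (μ : ℂ) • σ3

section WindingAux
open MeasureTheory Set Filter


lemma radial (μ : ℝ) (hμ : μ ≠ 0) :
    ∫ r in Ioi (0:ℝ), r * (r^2 + μ^2) ^ (-(3:ℝ)/2) = 1 / |μ| := by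
  have hs : ∀ r : ℝ, 0 < r^2 + μ^2 := fun r => by positivity
  have hderiv : ∀ r ∈ Ici (0:ℝ),
      HasDerivAt (fun r : ℝ => -(r^2 + μ^2) ^ (-(1:ℝ)/2)) (r * (r^2 + μ^2) ^ (-(3:ℝ)/2)) r := by
    intro r _
    have h1 : HasDerivAt (fun r : ℝ => r^2 + μ^2) (2*r) r := by
      simpa using ((hasDerivAt_pow 2 r).add_const (μ^2))
    have h2 := (Real.hasDerivAt_rpow_const (p := -(1:ℝ)/2) (Or.inl (hs r).ne')).comp r h1
    have := h2.neg
    refine this.congr_deriv ?_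
    have : (r^2 + μ^2) ^ (-(1:ℝ)/2 - 1) = (r^2 + μ^2) ^ (-(3:ℝ)/2) := by norm_num
    rw [this]; ring
  have hT : Tendsto (fun r : ℝ => r^2 + μ^2) atTop atTop := by
    apply tendsto_atTop_add_const_right
    simpa using (tendsto_pow_atTop (n := 2) (by norm_num))
  have htend : Tendsto (fun r : ℝ => -(r^2 + μ^2) ^ (-(1:ℝ)/2)) atTop (nhds 0) := by
    have h0 := (tendsto_rpow_neg_atTop (y := (1:ℝ)/2) (by norm_num)).comp hT
    rw [show (0:ℝ) = -0 by norm_num]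
    refine Tendsto.neg ?_
    have : (fun r : ℝ => (r^2 + μ^2) ^ (-(1:ℝ)/2))
        = (fun x : ℝ => x ^ (-((1:ℝ)/2))) ∘ (fun r : ℝ => r^2 + μ^2) := by
      funext r; simp [Function.comp]; norm_num
    rw [this]; exact h0
  have := integral_Ioi_of_hasDerivAt_of_nonneg' hderiv
    (fun x hx => mul_nonneg (le_of_lt hx) (Real.rpow_nonneg (hs x).le _)) htend
  rw [this]
  have h2 : ((0:ℝ)^2 + μ^2) ^ (-(1:ℝ)/2) = 1/|μ| := by
    rw [show (0:ℝ)^2 + μ^2 = |μ|^2 by rw [_root_.sq_abs]; ring]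
    rw [← Real.rpow_natCast |μ| 2, ← Real.rpow_mul (abs_nonneg μ)]
    norm_num [Real.rpow_neg_one, one_div]
  rw [h2]; ring

lemma planar (μ : ℝ) (hμ : μ ≠ 0) :
    ∫ ξ : ℝ × ℝ, (ξ.1^2 + ξ.2^2 + μ^2) ^ (-(3:ℝ)/2) = 2 * Real.pi / |μ| := by
  rw [← integral_comp_polarCoord_symm]
  have key : ∀ p : ℝ × ℝ,
      p.1 • (((polarCoord.symm p).1)^2 + ((polarCoord.symm p).2)^2 + μ^2) ^ (-(3:ℝ)/2)
      = (p.1 * (p.1^2 + μ^2) ^ (-(3:ℝ)/2)) * (1:ℝ) := by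
    intro p
    rw [polarCoord_symm_apply]
    rw [show (p.1 * Real.cos p.2)^2 + (p.1 * Real.sin p.2)^2 + μ^2 = p.1^2 + μ^2 by
      have := Real.sin_sq_add_cos_sq p.2; nlinarith]
    simp [smul_eq_mul]
  simp only [key]
  rw [polarCoord_target, MeasureTheory.Measure.volume_eq_prod, ← Measure.prod_restrict]
  rw [show (fun p : ℝ × ℝ => (p.1 * (p.1^2 + μ^2) ^ (-(3:ℝ)/2)) * (1:ℝ))
      = fun p : ℝ × ℝ => (fun r => r * (r^2 + μ^2) ^ (-(3:ℝ)/2)) p.1 * (fun _ : ℝ => (1:ℝ)) p.2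
      from rfl]
  rw [MeasureTheory.integral_prod_mul (f := fun r : ℝ => r * (r^2 + μ^2) ^ (-(3:ℝ)/2))
    (g := fun _ : ℝ => (1:ℝ)), radial μ hμ]
  simp only [integral_const, MeasurableSet.univ, Measure.restrict_apply, Set.univ_inter,
    Real.volume_Ioo, smul_eq_mul, mul_one]
  rw [measureReal_def, Measure.restrict_apply MeasurableSet.univ, Set.univ_inter, Real.volume_Ioo,
    ENNReal.toReal_ofReal (by have := Real.pi_pos; linarith : (0:ℝ) ≤ Real.pi - -Real.pi)]
  ring


/-- the bulk winding-number invariant of the massive Dirac Hamiltonian: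
`(i/2π) ∫_{ℝ²} (-1/(8(|ξ|²+μ²)^{3/2})) tr(H(ξ)[σ₁,σ₂]) dξ = sign(μ)/2`. -/
theorem dirac_winding_number (μ : ℝ) (hμ : μ ≠ 0) :
    Complex.I / (2 * (Real.pi : ℂ)) *
        ∫ ξ : ℝ × ℝ,
          (((-1 : ℝ) / (8 * (ξ.1 ^ 2 + ξ.2 ^ 2 + μ ^ 2) ^ ((3 : ℝ) / 2)) : ℝ) : ℂ) *
            Matrix.trace (Hdirac μ ξ * (σ1 * σ2 - σ2 * σ1))
      = ((Real.sign μ : ℝ) : ℂ) / 2 := by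
  have hπ : (Real.pi : ℝ) ≠ 0 := Real.pi_ne_zero
  have habs : |μ| ≠ 0 := abs_ne_zero.mpr hμ
  have htr : ∀ ξ : ℝ × ℝ,
      Matrix.trace (Hdirac μ ξ * (σ1 * σ2 - σ2 * σ1)) = 4 * Complex.I * μ := by
    intro ξ
    simp [Hdirac, σ1, σ2, σ3, Matrix.trace_fin_two, Matrix.mul_apply, Fin.sum_univ_two,
      Matrix.sub_apply, Matrix.add_apply, Matrix.smul_apply]
    ring
  have hpt : ∀ ξ : ℝ × ℝ,
      (((-1 : ℝ) / (8 * (ξ.1 ^ 2 + ξ.2 ^ 2 + μ ^ 2) ^ ((3 : ℝ) / 2)) : ℝ) : ℂ) *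
          Matrix.trace (Hdirac μ ξ * (σ1 * σ2 - σ2 * σ1))
        = (-(Complex.I * (μ : ℂ)) / 2) *
            (((ξ.1 ^ 2 + ξ.2 ^ 2 + μ ^ 2) ^ (-(3:ℝ)/2) : ℝ) : ℂ) := by
    intro ξ
    rw [htr ξ]
    have hs : (0:ℝ) < ξ.1 ^ 2 + ξ.2 ^ 2 + μ ^ 2 := by positivity
    have h1 : (ξ.1^2 + ξ.2^2 + μ^2) ^ (-(3:ℝ)/2)
        = ((ξ.1^2 + ξ.2^2 + μ^2) ^ ((3:ℝ)/2))⁻¹ := by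
      rw [show (-(3:ℝ)/2) = -((3:ℝ)/2) by norm_num, Real.rpow_neg hs.le]
    rw [h1]
    have hne : ((((ξ.1^2 + ξ.2^2 + μ^2) ^ ((3:ℝ)/2) : ℝ)) : ℂ) ≠ 0 := by
      exact_mod_cast (Real.rpow_pos_of_pos hs _).ne'
    push_cast
    field_simp
    ring
  have hint : (∫ ξ : ℝ × ℝ,
        (((-1 : ℝ) / (8 * (ξ.1 ^ 2 + ξ.2 ^ 2 + μ ^ 2) ^ ((3 : ℝ) / 2)) : ℝ) : ℂ) *
          Matrix.trace (Hdirac μ ξ * (σ1 * σ2 - σ2 * σ1)))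
      = (-(Complex.I * (μ : ℂ)) / 2) * ((2 * Real.pi / |μ| : ℝ) : ℂ) := by
    simp_rw [hpt]
    rw [MeasureTheory.integral_const_mul, ← planar μ hμ]
    congr 1
    exact integral_ofReal
  rw [hint]
  have hsign : Real.sign μ * |μ| = μ := by
    rcases hμ.lt_or_gt with h | h
    · rw [Real.sign_of_neg h, abs_of_neg h]; ring
    · rw [Real.sign_of_pos h, abs_of_pos h]; ring
  have hc : (μ : ℂ) = ((Real.sign μ : ℝ) : ℂ) * ((|μ| : ℝ) : ℂ) := by
    exact_mod_cast hsign.symm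
  rw [hc]
  have hπc : ((Real.pi : ℝ) : ℂ) ≠ 0 := by exact_mod_cast hπ
  have habsc : ((|μ| : ℝ) : ℂ) ≠ 0 := by exact_mod_cast habs
  push_cast
  field_simp
  ring_nf
  simp [Complex.I_sq]
end WindingAux
end
end

section
/- (Averaging theorem, bounded self-adjoint version of Proposition 4.1.) Let ℋ be a complex Hilbert space, t₀ > 0, and let H : ℝ → B(ℋ) be continuous in operator norm, t₀-periodic, with H(t) self-adjoint for every t, and set M := sup_t ‖H(t)‖ < ∞ and ⟨H⟩ := (1/t₀) ∫₀^{t₀} H(s) ds. Then there exists a constant C depending only on t₀ and M such that the following holds: for every ε > 0, every φ ∈ ℋ, and every pair of differentiable curves ψ_ε, ψ : [0,∞) → ℋ satisfying i ψ_ε'(t) = H(t/ε) ψ_ε(t), i ψ'(t) = ⟨H⟩ ψ(t), and ψ_ε(0) = ψ(0) = φ, one has ‖ψ_ε(t) − ψ(t)‖ ≤ C (1 + t) ε ‖φ‖ for all t ≥ 0. -/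
open MeasureTheory

noncomputable section
set_option maxHeartbeats 1000000
set_option synthInstance.maxHeartbeats 400000

/-- If `f ≥ 0`, `f 0 = 0` and `|f'| ≤ 2 r √f` on `[0,T]`, then `√(f T) ≤ r T`. -/
lemma aux_sqrt_growth {f f' : ℝ → ℝ} {r T : ℝ} (hr : 0 ≤ r) (hT : 0 ≤ T)
    (hf : ∀ t ∈ Set.Icc (0:ℝ) T, HasDerivWithinAt f (f' t) (Set.Icc 0 T) t)
    (h0 : f 0 = 0) (hnn : ∀ t, 0 ≤ f t)
    (hb : ∀ t ∈ Set.Icc (0:ℝ) T, |f' t| ≤ 2 * r * Real.sqrt (f t)) :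
    Real.sqrt (f T) ≤ r * T := by
  have key : ∀ δ : ℝ, 0 < δ → Real.sqrt (f T) ≤ r * T + δ := by
    intro δ hδ
    have hpos : ∀ t : ℝ, (0:ℝ) < f t + δ^2 := fun t => by nlinarith [hnn t]
    have hgd : ∀ t ∈ Set.Icc (0:ℝ) T,
        HasDerivWithinAt (fun t => Real.sqrt (f t + δ^2))
          (f' t / (2 * Real.sqrt (f t + δ^2))) (Set.Icc 0 T) t := by
      intro t ht
      exact ((hf t ht).add_const (δ^2)).sqrt (ne_of_gt (hpos t))
    have hbound : ∀ t ∈ Set.Ico (0:ℝ) T, ‖f' t / (2 * Real.sqrt (f t + δ^2))‖ ≤ r := by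
      intro t ht
      have ht' : t ∈ Set.Icc (0:ℝ) T := ⟨ht.1, le_of_lt ht.2⟩
      have h1 : Real.sqrt (f t) ≤ Real.sqrt (f t + δ^2) :=
        Real.sqrt_le_sqrt (by nlinarith [hnn t])
      have h2 : (0:ℝ) < Real.sqrt (f t + δ^2) := Real.sqrt_pos.2 (hpos t)
      have h3 : |f' t| ≤ r * (2 * Real.sqrt (f t + δ^2)) := by
        have := hb t ht'
        nlinarith [Real.sqrt_nonneg (f t)]
      rw [Real.norm_eq_abs, abs_div, abs_of_pos (by positivity : (0:ℝ) < 2 * Real.sqrt (f t + δ^2))]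
      rw [div_le_iff₀ (by positivity)]
      exact h3
    have := norm_image_sub_le_of_norm_deriv_le_segment' hgd hbound T
      (Set.right_mem_Icc.2 hT)
    rw [Real.norm_eq_abs, sub_zero] at this
    have h3 : Real.sqrt (f T + δ^2) - Real.sqrt (f 0 + δ^2) ≤ r * T :=
      le_trans (le_abs_self _) this
    have h4 : Real.sqrt (f 0 + δ^2) = δ := by
      rw [h0, zero_add, Real.sqrt_sq hδ.le]
    have h5 : Real.sqrt (f T) ≤ Real.sqrt (f T + δ^2) :=
      Real.sqrt_le_sqrt (by nlinarith [hnn T])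
    rw [h4] at h3
    linarith
  by_contra hcon
  push_neg at hcon
  have hδ : 0 < (Real.sqrt (f T) - r * T) / 2 := by linarith
  have := key _ hδ
  linarith

/-- For a self-adjoint `T`, `re ⟪(-i) • T x, x⟫ = 0`. -/
lemma aux_re_inner_skew {ℋ : Type*} [NormedAddCommGroup ℋ] [InnerProductSpace ℂ ℋ]
    [CompleteSpace ℋ] {T : ℋ →L[ℂ] ℋ} (hT : IsSelfAdjoint T) (x : ℋ) :
    Complex.re (inner ℂ ((-Complex.I) • T x) x : ℂ) = 0 := by
  have hsym := ContinuousLinearMap.isSelfAdjoint_iff_isSymmetric.1 hT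
  have ha : (inner ℂ (T x) x : ℂ) = inner ℂ x (T x) := hsym x x
  have hconj : (inner ℂ x (T x) : ℂ) = starRingEnd ℂ (inner ℂ (T x) x : ℂ) :=
    (inner_conj_symm _ _).symm
  have him : (inner ℂ (T x) x : ℂ).im = 0 := by
    have := congrArg Complex.im (ha.trans hconj)
    simp only [Complex.conj_im] at this
    linarith
  rw [inner_smul_left]
  simp [Complex.mul_re, him]

/-- Curve with `χ 0 = 0` and derivative whose inner ℂ product with `χ` is small grows linearly. -/
lemma aux_curve_norm_le {ℋ : Type*} [NormedAddCommGroup ℋ] [InnerProductSpace ℂ ℋ]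
    [CompleteSpace ℋ] {χ D : ℝ → ℋ} {r T : ℝ} (hr : 0 ≤ r) (hT : 0 ≤ T)
    (hχ : ∀ t ∈ Set.Icc (0:ℝ) T, HasDerivWithinAt χ (D t) (Set.Icc 0 T) t)
    (h0 : χ 0 = 0)
    (hD : ∀ t ∈ Set.Icc (0:ℝ) T, |Complex.re (inner ℂ (D t) (χ t) : ℂ)| ≤ r * ‖χ t‖) :
    ‖χ T‖ ≤ r * T := by
  set f : ℝ → ℝ := fun t => Complex.re (inner ℂ (χ t) (χ t) : ℂ) with hfdef
  have hfnorm : ∀ t, f t = ‖χ t‖ ^ 2 := fun t => inner_self_eq_norm_sq (𝕜 := ℂ) (χ t)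
  have hsqrt : ∀ t, Real.sqrt (f t) = ‖χ t‖ := by
    intro t
    rw [hfnorm t, Real.sqrt_sq (norm_nonneg _)]
  have hder : ∀ t ∈ Set.Icc (0:ℝ) T,
      HasDerivWithinAt f (2 * Complex.re (inner ℂ (D t) (χ t) : ℂ)) (Set.Icc 0 T) t := by
    intro t ht
    have hi : HasDerivWithinAt (fun t => (inner ℂ (χ t) (χ t) : ℂ))
        (inner ℂ (χ t) (D t) + inner ℂ (D t) (χ t)) (Set.Icc 0 T) t :=
      (hχ t ht).inner ℂ (hχ t ht)
    have := (Complex.reCLM.hasFDerivAt).comp_hasDerivWithinAt t hi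
    refine this.congr_deriv ?_
    have h : (inner ℂ (χ t) (D t) : ℂ) = starRingEnd ℂ (inner ℂ (D t) (χ t) : ℂ) :=
      (inner_conj_symm _ _).symm
    rw [Complex.reCLM_apply, Complex.add_re, h, Complex.conj_re]
    ring
  have := aux_sqrt_growth hr hT hder (by simp [hfnorm, h0]) (fun t => by rw [hfnorm]; positivity)
    (fun t ht => by rw [abs_mul, abs_of_nonneg (by norm_num : (0:ℝ) ≤ 2), hsqrt]
                    calc (2:ℝ) * |Complex.re (inner ℂ (D t) (χ t) : ℂ)|
                        ≤ 2 * (r * ‖χ t‖) := by have := hD t ht; linarith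
                      _ = 2 * r * ‖χ t‖ := by ring)
  rwa [hsqrt] at this

/-- Derivative of `t ↦ re ⟪χ t, χ t⟫`. -/
lemma aux_inner_deriv {ℋ : Type*} [NormedAddCommGroup ℋ] [InnerProductSpace ℂ ℋ]
    [CompleteSpace ℋ] {χ : ℝ → ℋ} {D : ℋ} {s : Set ℝ} {t : ℝ}
    (hχ : HasDerivWithinAt χ D s t) :
    HasDerivWithinAt (fun u => Complex.re (inner ℂ (χ u) (χ u) : ℂ))
      (2 * Complex.re (inner ℂ D (χ t) : ℂ)) s t := by
  have hi : HasDerivWithinAt (fun u => (inner ℂ (χ u) (χ u) : ℂ))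
      (inner ℂ (χ t) D + inner ℂ D (χ t)) s t := hχ.inner ℂ hχ
  have h2 := (Complex.reCLM.hasFDerivAt).comp_hasDerivWithinAt t hi
  refine h2.congr_deriv ?_
  have h : (inner ℂ (χ t) D : ℂ) = starRingEnd ℂ (inner ℂ D (χ t) : ℂ) :=
    (inner_conj_symm _ _).symm
  rw [Complex.reCLM_apply, Complex.add_re, h, Complex.conj_re]
  ring

/-- Norm conservation for a Schrödinger evolution with self-adjoint generator. -/
lemma aux_norm_const {ℋ : Type*} [NormedAddCommGroup ℋ] [InnerProductSpace ℂ ℋ]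
    [CompleteSpace ℋ] {A : ℋ →L[ℂ] ℋ} (hA : IsSelfAdjoint A) {ψ : ℝ → ℋ} {T : ℝ} (hT : 0 ≤ T)
    (hψ : ∀ t ∈ Set.Icc (0:ℝ) T, HasDerivWithinAt ψ ((-Complex.I) • A (ψ t)) (Set.Icc 0 T) t) :
    ‖ψ T‖ = ‖ψ 0‖ := by
  set f : ℝ → ℝ := fun t => Complex.re (inner ℂ (ψ t) (ψ t) : ℂ) with hfdef
  have hder : ∀ t ∈ Set.Icc (0:ℝ) T, HasDerivWithinAt f (0:ℝ) (Set.Icc 0 T) t := by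
    intro t ht
    have := aux_inner_deriv (hψ t ht)
    rwa [aux_re_inner_skew hA (ψ t), mul_zero] at this
  have := norm_image_sub_le_of_norm_deriv_le_segment' (C := 0) hder
    (fun x _ => by simp) T (Set.right_mem_Icc.2 hT)
  rw [Real.norm_eq_abs] at this
  have hf : f T = f 0 := by
    have h0 := abs_nonneg (f T - f 0)
    have : |f T - f 0| ≤ 0 := by simpa using this
    have := abs_eq_zero.1 (le_antisymm this h0)
    linarith
  have hfn : ∀ t, f t = ‖ψ t‖ ^ 2 := fun t => inner_self_eq_norm_sq (𝕜 := ℂ) (ψ t)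
  have : ‖ψ T‖ ^ 2 = ‖ψ 0‖ ^ 2 := by rw [← hfn, ← hfn]; exact hf
  nlinarith [norm_nonneg (ψ T), norm_nonneg (ψ 0)]

/-- averaging theorem, bounded self-adjoint version of Proposition 4.1:
for `t₀ > 0` and `M`, there is a constant `C = C(t₀, M)` such that for any continuous
`t₀`-periodic family of bounded self-adjoint operators `H(t)` with `‖H(t)‖ ≤ M` on a complex
Hilbert space, any `ε > 0`, and any solutions `ψ_ε, ψ` of `iψ_ε' = H(t/ε)ψ_ε`,
`iψ' = ⟨H⟩ψ` with the same initial data `φ`, one has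
`‖ψ_ε(t) - ψ(t)‖ ≤ C(1+t)ε‖φ‖` for all `t ≥ 0`. -/
theorem averaging_theorem (t₀ M : ℝ) (ht₀ : 0 < t₀) :
    ∃ C : ℝ, ∀ (ℋ : Type) [NormedAddCommGroup ℋ] [InnerProductSpace ℂ ℋ] [CompleteSpace ℋ]
      (H : ℝ → (ℋ →L[ℂ] ℋ)),
      Continuous H → (∀ t : ℝ, H (t + t₀) = H t) → (∀ t : ℝ, IsSelfAdjoint (H t)) →
      (∀ t : ℝ, ‖H t‖ ≤ M) →
      ∀ ε : ℝ, 0 < ε → ∀ (φ : ℋ) (ψε ψ : ℝ → ℋ),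
        (∀ t : ℝ, 0 ≤ t → HasDerivAt ψε ((-Complex.I) • (H (t / ε)) (ψε t)) t) →
        (∀ t : ℝ, 0 ≤ t →
          HasDerivAt ψ ((-Complex.I) • (((1 / t₀) • ∫ s in (0 : ℝ)..t₀, H s) (ψ t))) t) →
        ψε 0 = φ → ψ 0 = φ →
        ∀ t : ℝ, 0 ≤ t → ‖ψε t - ψ t‖ ≤ C * (1 + t) * ε * ‖φ‖ := by
  refine ⟨2 * (max M 0) * t₀ * (2 * (max M 0) + 1), ?_⟩
  intro ℋ _ _ _ H Hcont Hper Hsa HM ε hε φ ψε ψ hψε hψ hψε0 hψ0 T hT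
  have hM0 : 0 ≤ M := le_trans (norm_nonneg (H 0)) (HM 0)
  rw [max_eq_left hM0]
  set A : ℋ →L[ℂ] ℋ := (1 / t₀) • ∫ s in (0:ℝ)..t₀, H s with hAdef
  have hInt : ∀ a b : ℝ, IntervalIntegrable H volume a b := fun a b =>
    Hcont.intervalIntegrable a b
  -- ‖A‖ ≤ M
  have hAnorm : ‖A‖ ≤ M := by
    have h1 : ‖∫ s in (0:ℝ)..t₀, H s‖ ≤ M * |t₀ - 0| :=
      intervalIntegral.norm_integral_le_of_norm_le_const (fun x _ => HM x)
    rw [sub_zero, abs_of_pos ht₀] at h1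
    rw [hAdef, norm_smul, Real.norm_eq_abs, abs_of_pos (by positivity : (0:ℝ) < 1 / t₀)]
    calc 1 / t₀ * ‖∫ s in (0:ℝ)..t₀, H s‖ ≤ 1 / t₀ * (M * t₀) := by
          apply mul_le_mul_of_nonneg_left h1 (by positivity)
      _ = M := by field_simp
  -- A is self-adjoint
  have hAsa : IsSelfAdjoint A := by
    have hstar : star (∫ s in (0:ℝ)..t₀, H s) = ∫ s in (0:ℝ)..t₀, star (H s) := by
      have := ((starL' ℝ : (ℋ →L[ℂ] ℋ) ≃L[ℝ] (ℋ →L[ℂ] ℋ)).toContinuousLinearMap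
        ).intervalIntegral_comp_comm (hInt 0 t₀)
      simpa using this.symm
    have hint_sa : IsSelfAdjoint (∫ s in (0:ℝ)..t₀, H s) := by
      unfold IsSelfAdjoint
      rw [hstar]
      exact intervalIntegral.integral_congr (fun s _ => Hsa s)
    exact IsSelfAdjoint.smul (star_trivial _) hint_sa
  -- the fast Hamiltonian and its primitive
  have hHεcont : Continuous (fun s : ℝ => H (s / ε)) :=
    Hcont.comp (continuous_id.div_const ε)
  have hGintcont : Continuous (fun s : ℝ => H (s / ε) - A) := hHεcont.sub continuous_const
  set G : ℝ → (ℋ →L[ℂ] ℋ) := fun t => ∫ s in (0:ℝ)..t, (H (s / ε) - A) with hGdef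
  have hGderiv : ∀ t : ℝ, HasDerivAt G (H (t / ε) - A) t := by
    intro t
    exact intervalIntegral.integral_hasDerivAt_right
      (hGintcont.intervalIntegrable 0 t)
      (hGintcont.stronglyMeasurableAtFilter volume (nhds t))
      hGintcont.continuousAt
  -- the primitive of H - A and its periodicity
  set F : ℝ → (ℋ →L[ℂ] ℋ) := fun τ => (∫ s in (0:ℝ)..τ, H s) - τ • A with hFdef
  have ht0A : t₀ • A = ∫ s in (0:ℝ)..t₀, H s := by
    rw [hAdef, smul_smul]
    rw [mul_one_div, div_self ht₀.ne', one_smul]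
  have hFper : Function.Periodic F t₀ := by
    intro τ
    have hsplit : ∫ s in (0:ℝ)..(τ + t₀), H s
        = (∫ s in (0:ℝ)..τ, H s) + ∫ s in τ..(τ + t₀), H s :=
      (intervalIntegral.integral_add_adjacent_intervals (hInt 0 τ) (hInt τ _)).symm
    have hper' : ∫ s in τ..(τ + t₀), H s = ∫ s in (0:ℝ)..(0 + t₀), H s :=
      Function.Periodic.intervalIntegral_add_eq Hper τ 0
    simp only [hFdef]
    rw [hsplit, hper', zero_add, add_smul, ← ht0A]
    abel
  have hFbound : ∀ τ : ℝ, ‖F τ‖ ≤ 2 * M * t₀ := by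
    intro τ
    obtain ⟨y, hy, hFy⟩ := hFper.exists_mem_Ico₀ ht₀ τ
    rw [hFy]
    have h1 : ‖∫ s in (0:ℝ)..y, H s‖ ≤ M * |y - 0| :=
      intervalIntegral.norm_integral_le_of_norm_le_const (fun x _ => HM x)
    rw [sub_zero, abs_of_nonneg hy.1] at h1
    have h2 : ‖y • A‖ ≤ y * M := by
      rw [norm_smul, Real.norm_eq_abs, abs_of_nonneg hy.1]
      exact mul_le_mul_of_nonneg_left hAnorm hy.1
    calc ‖F y‖ ≤ ‖∫ s in (0:ℝ)..y, H s‖ + ‖y • A‖ := norm_sub_le _ _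
      _ ≤ M * y + y * M := add_le_add h1 h2
      _ ≤ 2 * M * t₀ := by nlinarith [hy.1, hy.2, hM0]
  -- G t = ε • F (t/ε)
  have hGF : ∀ t : ℝ, G t = ε • F (t / ε) := by
    intro t
    have hsub : G t = (∫ s in (0:ℝ)..t, H (s / ε)) - ∫ s in (0:ℝ)..t, A := by
      rw [hGdef]
      exact intervalIntegral.integral_sub (hHεcont.intervalIntegrable 0 t)
        (intervalIntegrable_const)
    have hcomp : (∫ s in (0:ℝ)..t, H (s / ε)) = ε • ∫ s in (0:ℝ)..(t / ε), H s := by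
      rw [intervalIntegral.integral_comp_div (fun s => H s) hε.ne', zero_div]
    have hF2 : ε • F (t / ε) = (ε • ∫ s in (0:ℝ)..(t / ε), H s) - t • A := by
      show ε • ((∫ s in (0:ℝ)..(t / ε), H s) - (t / ε) • A) = _
      rw [smul_sub, smul_smul, mul_div_cancel₀ t hε.ne']
    rw [hsub, hcomp, intervalIntegral.integral_const, sub_zero, hF2]
  have hGbound : ∀ t : ℝ, ‖G t‖ ≤ 2 * M * t₀ * ε := by
    intro t
    rw [hGF t, norm_smul, Real.norm_eq_abs, abs_of_pos hε]
    calc ε * ‖F (t / ε)‖ ≤ ε * (2 * M * t₀) :=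
          mul_le_mul_of_nonneg_left (hFbound _) hε.le
      _ = 2 * M * t₀ * ε := by ring
  -- norm conservation for ψ
  have hψnorm : ∀ t : ℝ, 0 ≤ t → ‖ψ t‖ = ‖φ‖ := by
    intro t ht
    have := aux_norm_const hAsa (ψ := ψ) (T := t) ht
      (fun u hu => (hψ u hu.1).hasDerivWithinAt)
    rw [this, hψ0]
  -- the corrected difference
  set χ : ℝ → ℋ := fun t => (ψε t - ψ t) + Complex.I • (G t) (ψ t) with hχdef
  have hχ0 : χ 0 = 0 := by
    simp [hχdef, hψε0, hψ0, hGdef, intervalIntegral.integral_same]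
  set R : ℝ → ℋ := fun t => (G t) (A (ψ t)) - (H (t / ε)) ((G t) (ψ t)) with hRdef
  set D : ℝ → ℋ := fun t => (-Complex.I) • (H (t / ε)) (χ t) + R t with hDdef
  have hχD : ∀ t : ℝ, 0 ≤ t → HasDerivAt χ (D t) t := by
    intro t ht
    have h1 := (hψε t ht).sub (hψ t ht)
    have hGres : HasDerivAt (fun v => (G v).restrictScalars ℝ)
        ((H (t / ε) - A).restrictScalars ℝ) t :=
      (ContinuousLinearMap.restrictScalarsL ℂ ℋ ℋ ℝ ℝ).hasFDerivAt.comp_hasDerivAt t (hGderiv t)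
    have h2 := hGres.clm_apply (hψ t ht)
    have h3 := h2.const_smul Complex.I
    have h4 := h1.add h3
    refine h4.congr_deriv ?_
    simp only [hDdef, hRdef, hχdef, ContinuousLinearMap.coe_restrictScalars',
      ContinuousLinearMap.sub_apply, _root_.map_smul, map_sub, map_add,
      smul_sub, smul_add, smul_smul]
    rw [show Complex.I * -Complex.I = 1 by simp [Complex.I_mul_I]]
    rw [show -Complex.I * Complex.I = 1 by simp [Complex.I_mul_I]]
    module
  -- bound on R
  set r : ℝ := 2 * M * (2 * M * t₀ * ε) * ‖φ‖ with hrdef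
  have hr0 : 0 ≤ r := by positivity
  have hRbound : ∀ t : ℝ, 0 ≤ t → ‖R t‖ ≤ r := by
    intro t ht
    have hψn := hψnorm t ht
    have hGb := hGbound t
    have h1 : ‖(G t) (A (ψ t))‖ ≤ (2 * M * t₀ * ε) * (M * ‖φ‖) := by
      calc ‖(G t) (A (ψ t))‖ ≤ ‖G t‖ * ‖A (ψ t)‖ := (G t).le_opNorm _
        _ ≤ ‖G t‖ * (‖A‖ * ‖ψ t‖) := by
            apply mul_le_mul_of_nonneg_left (A.le_opNorm _) (norm_nonneg _)
        _ ≤ (2 * M * t₀ * ε) * (M * ‖φ‖) := by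
            rw [hψn]
            apply mul_le_mul hGb _ (by positivity) (by positivity)
            exact mul_le_mul_of_nonneg_right hAnorm (norm_nonneg _)
    have h2 : ‖(H (t / ε)) ((G t) (ψ t))‖ ≤ M * ((2 * M * t₀ * ε) * ‖φ‖) := by
      calc ‖(H (t / ε)) ((G t) (ψ t))‖ ≤ ‖H (t / ε)‖ * ‖(G t) (ψ t)‖ :=
            (H (t / ε)).le_opNorm _
        _ ≤ M * ((2 * M * t₀ * ε) * ‖φ‖) := by
            apply mul_le_mul (HM _) _ (norm_nonneg _) hM0
            calc ‖(G t) (ψ t)‖ ≤ ‖G t‖ * ‖ψ t‖ := (G t).le_opNorm _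
              _ ≤ (2 * M * t₀ * ε) * ‖φ‖ := by
                  rw [hψn]
                  exact mul_le_mul_of_nonneg_right hGb (norm_nonneg _)
    calc ‖R t‖ ≤ ‖(G t) (A (ψ t))‖ + ‖(H (t / ε)) ((G t) (ψ t))‖ := norm_sub_le _ _
      _ ≤ (2 * M * t₀ * ε) * (M * ‖φ‖) + M * ((2 * M * t₀ * ε) * ‖φ‖) := add_le_add h1 h2
      _ = r := by rw [hrdef]; ring
  -- the inner-product bound on D
  have hskew : ∀ t ∈ Set.Icc (0:ℝ) T, |Complex.re (inner ℂ (D t) (χ t) : ℂ)| ≤ r * ‖χ t‖ := by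
    intro t htm
    have hre : Complex.re (inner ℂ (D t) (χ t) : ℂ) = Complex.re (inner ℂ (R t) (χ t) : ℂ) := by
      rw [hDdef]
      simp only [inner_add_left, Complex.add_re]
      rw [aux_re_inner_skew (Hsa (t / ε)) (χ t), zero_add]
    rw [hre]
    calc |Complex.re (inner ℂ (R t) (χ t) : ℂ)| ≤ ‖(inner ℂ (R t) (χ t) : ℂ)‖ := by
          exact Complex.abs_re_le_norm _
      _ ≤ ‖R t‖ * ‖χ t‖ := norm_inner_le_norm _ _
      _ ≤ r * ‖χ t‖ :=
          mul_le_mul_of_nonneg_right (hRbound t htm.1) (norm_nonneg _)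
  -- the main estimate
  have hχT : ‖χ T‖ ≤ r * T :=
    aux_curve_norm_le hr0 hT
      (fun t htm => (hχD t htm.1).hasDerivWithinAt) hχ0 hskew
  -- conclude
  have hGψ : ‖Complex.I • (G T) (ψ T)‖ ≤ 2 * M * t₀ * ε * ‖φ‖ := by
    rw [norm_smul, Complex.norm_I, one_mul]
    calc ‖(G T) (ψ T)‖ ≤ ‖G T‖ * ‖ψ T‖ := (G T).le_opNorm _
      _ ≤ 2 * M * t₀ * ε * ‖φ‖ := by
          rw [hψnorm T hT]
          exact mul_le_mul_of_nonneg_right (hGbound T) (norm_nonneg _)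
  have hfinal : ‖ψε T - ψ T‖ ≤ r * T + 2 * M * t₀ * ε * ‖φ‖ := by
    have : ψε T - ψ T = χ T - Complex.I • (G T) (ψ T) := by
      simp only [hχdef, add_sub_cancel_right]
    rw [this]
    calc ‖χ T - Complex.I • (G T) (ψ T)‖
        ≤ ‖χ T‖ + ‖Complex.I • (G T) (ψ T)‖ := norm_sub_le _ _
      _ ≤ r * T + 2 * M * t₀ * ε * ‖φ‖ := add_le_add hχT hGψ
  refine le_trans hfinal ?_
  rw [hrdef]
  have hφ : (0:ℝ) ≤ ‖φ‖ := norm_nonneg _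
  nlinarith [mul_nonneg (mul_nonneg (mul_nonneg hM0 hM0) ht₀.le) (mul_nonneg hε.le hφ),
    mul_nonneg (mul_nonneg hM0 ht₀.le) (mul_nonneg hε.le hφ),
    mul_nonneg (mul_nonneg (mul_nonneg (mul_nonneg hM0 hM0) ht₀.le) (mul_nonneg hε.le hφ)) hT,
    mul_nonneg (mul_nonneg (mul_nonneg hM0 ht₀.le) (mul_nonneg hε.le hφ)) hT]
end
end
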